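/- arXiv:2211.09428 — 2 statements merged into one kernel-verified Lean document; each statement's English description precedes it below -/
import Mathlib

section
/- Let X be a countable set and let k : X × X → ℂ be a normalised kernel of positive type (k(x,x) = 1 for all x). Then the Schur multiplier m_k : B(ℓ²(X)) → B(ℓ²(X)), defined on matrix entries by (m_k(T))_{x,y} = k(x,y)·T_{x,y}, is a well-defined bounded linear map with ‖m_k(T)‖ ≤ ‖T‖ for all T ∈ B(ℓ²(X)). -/
open scoped ENNReal
open Metric Set Function

noncomputable section

variable {X : Type*}

/-- The pointwise product of an `ℓ∞` function and an `ℓ²` function is again `ℓ²`. -/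
theorem memℓp_two_mul (f : lp (fun _ : X => ℂ) ∞) (ξ : lp (fun _ : X => ℂ) 2) :
    Memℓp (fun x => f x * ξ x) 2 := by
  apply memℓp_gen
  have h2 : (2 : ℝ≥0∞).toReal = 2 := by norm_num
  rw [h2]
  have hsum : Summable fun x => ‖f‖ ^ (2:ℝ) * ‖ξ x‖ ^ (2:ℝ) :=
    (by simpa [h2] using (lp.memℓp ξ).summable (by rw [h2]; norm_num) :
      Summable fun x => ‖ξ x‖ ^ (2:ℝ)).mul_left _
  refine Summable.of_nonneg_of_le (fun x => by positivity) (fun x => ?_) hsum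
  have h1 : ‖f x * ξ x‖ ≤ ‖f‖ * ‖ξ x‖ := by
    rw [norm_mul]
    exact mul_le_mul_of_nonneg_right (lp.norm_apply_le_norm (by norm_num) f x) (norm_nonneg _)
  calc ‖f x * ξ x‖ ^ (2:ℝ) ≤ (‖f‖ * ‖ξ x‖) ^ (2:ℝ) := by
        gcongr
    _ = ‖f‖ ^ (2:ℝ) * ‖ξ x‖ ^ (2:ℝ) := by
        rw [Real.mul_rpow (norm_nonneg _) (norm_nonneg _)]

/-- Multiplication by a bounded function `f ∈ ℓ∞(X)`, as a bounded operator on `ℓ²(X)`. -/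
def mulOp (f : lp (fun _ : X => ℂ) ∞) :
    lp (fun _ : X => ℂ) 2 →L[ℂ] lp (fun _ : X => ℂ) 2 :=
  LinearMap.mkContinuous
    { toFun := fun ξ => ⟨fun x => f x * ξ x, memℓp_two_mul f ξ⟩
      map_add' := fun ξ η => Subtype.ext <| funext fun x => by
        simp only [lp.coeFn_add, Pi.add_apply, mul_add]
      map_smul' := fun c ξ => Subtype.ext <| funext fun x => by
        simp only [lp.coeFn_smul, Pi.smul_apply, smul_eq_mul, RingHom.id_apply]
        ring }
    ‖f‖ (by
      intro ξ
      refine lp.norm_le_of_forall_sum_le (by norm_num) (by positivity) fun s => ?_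
      have hb : ∀ x ∈ s, ‖f x * ξ x‖ ^ ((2:ℝ≥0∞).toReal)
          ≤ ‖f‖ ^ ((2:ℝ≥0∞).toReal) * ‖ξ x‖ ^ ((2:ℝ≥0∞).toReal) := by
        intro x _
        rw [← Real.mul_rpow (norm_nonneg _) (norm_nonneg _)]
        refine Real.rpow_le_rpow (norm_nonneg _) ?_ (by norm_num)
        rw [norm_mul]
        exact mul_le_mul_of_nonneg_right (lp.norm_apply_le_norm (by norm_num) f x) (norm_nonneg _)
      calc ∑ x ∈ s, ‖f x * ξ x‖ ^ ((2:ℝ≥0∞).toReal)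
          ≤ ∑ x ∈ s, ‖f‖ ^ ((2:ℝ≥0∞).toReal) * ‖ξ x‖ ^ ((2:ℝ≥0∞).toReal) :=
            Finset.sum_le_sum hb
        _ = ‖f‖ ^ ((2:ℝ≥0∞).toReal) * ∑ x ∈ s, ‖ξ x‖ ^ ((2:ℝ≥0∞).toReal) := by
            rw [Finset.mul_sum]
        _ ≤ ‖f‖ ^ ((2:ℝ≥0∞).toReal) * ‖ξ‖ ^ ((2:ℝ≥0∞).toReal) :=
            mul_le_mul_of_nonneg_left (lp.sum_rpow_le_norm_rpow (by norm_num) ξ s)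
              (Real.rpow_nonneg (norm_nonneg _) _)
        _ = (‖f‖ * ‖ξ‖) ^ ((2:ℝ≥0∞).toReal) :=
            (Real.mul_rpow (norm_nonneg _) (norm_nonneg _)).symm)

/-- The standard basis vector `δ_x` of `ℓ²(X)`. -/
def delta [DecidableEq X] (x : X) : lp (fun _ : X => ℂ) 2 := lp.single 2 x (1 : ℂ)

/-- The matrix entry `T_{x,y} = ⟨δ_x, T δ_y⟩` of a bounded operator on `ℓ²(X)`. -/
def entry [DecidableEq X] (T : lp (fun _ : X => ℂ) 2 →L[ℂ] lp (fun _ : X => ℂ) 2)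
    (x y : X) : ℂ :=
  inner (𝕜 := ℂ) (delta x) (T (delta y))

open scoped ComplexOrder

/-!
A kernel of positive type is a Gram kernel: its reproducing kernel Hilbert space, read in a
Hilbert basis indexed by `ι`, gives functions `a i : X → ℂ` with
`k x y = ∑ᵢ conj (a i x) * a i y`, and `∑ᵢ |a i x|² = k x x = 1`. Hence the column
`V ξ = (a i * ξ)ᵢ : ℓ²(X) → ℓ²(ι, ℓ²(X))` is a contraction, and `m_k(T) = V* (T ⊗ 1) V`
has norm at most `‖T‖` and entries `∑ᵢ conj (a i x) * a i y * T_{x,y} = k x y * T_{x,y}`.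
-/

open scoped InnerProductSpace

universe u

section PositiveType

variable {k : X → X → ℂ}

theorem Matrix.isHermitian_of_forall_fin_sum_nonneg
    (hk : ∀ (n : ℕ) (x : Fin n → X) (lam : Fin n → ℂ),
      0 ≤ ∑ i, ∑ j, (starRingEnd ℂ) (lam i) * lam j * k (x i) (x j)) :
    (Matrix.of k).IsHermitian := by
  ext x y
  have hdiag : ∀ z, (k z z).im = 0 := fun z => by
    simpa using (Complex.nonneg_iff.1 (hk 1 ![z] ![1])).2.symm
  -- the Gram sums at `(x, y)` with weights `(1, 1)` and `(1, I)` are real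
  have hoff : ∀ c : ℂ, (c * k x y + (starRingEnd ℂ) c * k y x).im = 0 := fun c => by
    have h := (Complex.nonneg_iff.1 (hk 2 ![x, y] ![1, c])).2
    simp only [Fin.sum_univ_two, Matrix.cons_val_zero, Matrix.cons_val_one, Matrix.cons_val_fin_one,
      map_one, one_mul, mul_one, Complex.conj_mul', ← Complex.ofReal_pow, Complex.add_im,
      Complex.mul_im, Complex.conj_re, Complex.conj_im, Complex.ofReal_re, Complex.ofReal_im, hdiag,
      neg_mul, mul_zero, zero_mul, zero_add, add_zero] at h
    simp only [Complex.add_im, Complex.mul_im, Complex.conj_re, Complex.conj_im, neg_mul]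
    linarith
  have h1 := hoff 1
  have hI := hoff Complex.I
  simp only [one_mul, map_one, Complex.conj_I, neg_mul, Complex.add_im, Complex.mul_im,
    Complex.I_re, Complex.I_im, Complex.neg_im, zero_mul, zero_add] at h1 hI
  apply Complex.ext <;>
    simp only [conjTranspose_apply, of_apply, RCLike.star_def, Complex.conj_re, Complex.conj_im] <;>
    linarith

theorem Matrix.posSemidef_of_forall_fin_sum_nonneg
    (hk : ∀ (n : ℕ) (x : Fin n → X) (lam : Fin n → ℂ),
      0 ≤ ∑ i, ∑ j, (starRingEnd ℂ) (lam i) * lam j * k (x i) (x j)) :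
    (Matrix.of k).PosSemidef := by
  refine ⟨isHermitian_of_forall_fin_sum_nonneg hk, fun f => ?_⟩
  let e := f.support.equivFin
  have h := hk _ (fun i => e.symm i) (fun i => f (e.symm i))
  simp only [Finsupp.sum, of_apply, ← Finset.sum_coe_sort f.support]
  rw [← e.symm.sum_comp]
  refine h.trans_eq (Finset.sum_congr rfl fun i _ => ?_)
  rw [← e.symm.sum_comp]
  refine Finset.sum_congr rfl fun j _ => ?_
  rw [mul_right_comm]
  rfl

end PositiveType

/-- The Gram vectors of `K` live in its reproducing kernel Hilbert space; their coordinates in a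
Hilbert basis give `a`. -/
theorem Matrix.PosSemidef.exists_hasSum_star_mul {Y : Type u} {K : Matrix Y Y ℂ}
    (hK : K.PosSemidef) :
    ∃ (ι : Type u) (a : ι → Y → ℂ), ∀ x y, HasSum (fun i => star (a i x) * a i y) (K x y) := by
  let K' : Matrix Y Y (ℂ →L[ℂ] ℂ) := .of fun x y => K x y • 1
  have hK' : K'.PosSemidef := by
    have h := (RKHS.posSemidef_tfae (K := K')).out 0 2
    refine h.mpr ⟨?_, fun f => ?_⟩
    · ext1 x y
      simp [K', star_smul, hK.isHermitian.apply]
    · refine le_of_le_of_eq (Complex.le_def.1 (hK.2 f)).1 (congrArg Complex.re ?_)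
      refine Finsupp.sum_congr fun x _ => Finsupp.sum_congr fun x' _ => ?_
      simp only [K', of_apply, _root_.smul_apply, one_apply_eq_self, smul_eq_mul,
        RCLike.inner_apply, map_mul, RCLike.star_def, ← hK.isHermitian.apply x x']
      ring
  have : Fact K'.PosSemidef := ⟨hK'⟩
  let v : Y → RKHS.OfKernel K' := fun x => RKHS.kerFun (RKHS.OfKernel K') x 1
  have hv : ∀ x y, ⟪v x, v y⟫_ℂ = K x y := by
    intro x y
    simp only [v, RKHS.inner_kerFun, RKHS.kerFun_apply, RKHS.OfKernel.kernel_ofKernel]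
    simpa [K', RCLike.inner_apply] using hK.isHermitian.apply x y
  obtain ⟨w, b, -⟩ := exists_hilbertBasis ℂ (RKHS.OfKernel K')
  refine ⟨w, fun i x => ⟪b i, v x⟫_ℂ, fun x y => ?_⟩
  simpa [hv] using b.hasSum_inner_mul_inner (v x) (v y)

namespace ContinuousLinearMap

variable {𝕜 ι E F : Type*} [NontriviallyNormedField 𝕜] [NormedAddCommGroup E] [NormedSpace 𝕜 E]
  [NormedAddCommGroup F] [NormedSpace 𝕜 F]

theorem sum_norm_sq_apply_le (T : E →L[𝕜] F) (f : lp (fun _ : ι => E) 2) (s : Finset ι) :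
    ∑ i ∈ s, ‖T (f i)‖ ^ (2 : ℝ≥0∞).toReal ≤ (‖T‖ * ‖f‖) ^ (2 : ℝ≥0∞).toReal := by
  have h := lp.sum_rpow_le_norm_rpow (by norm_num) f s
  simp only [ENNReal.toReal_ofNat, Real.rpow_two] at h ⊢
  calc ∑ i ∈ s, ‖T (f i)‖ ^ 2 ≤ ∑ i ∈ s, ‖T‖ ^ 2 * ‖f i‖ ^ 2 := by
        gcongr with i
        rw [← mul_pow]
        gcongr
        exact T.le_opNorm (f i)
    _ = ‖T‖ ^ 2 * ∑ i ∈ s, ‖f i‖ ^ 2 := by rw [Finset.mul_sum]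
    _ ≤ (‖T‖ * ‖f‖) ^ 2 := by rw [mul_pow]; gcongr

def lpMap (T : E →L[𝕜] F) : lp (fun _ : ι => E) 2 →L[𝕜] lp (fun _ : ι => F) 2 :=
  LinearMap.mkContinuous
    { toFun := fun f => ⟨fun i => T (f i), memℓp_gen' (T.sum_norm_sq_apply_le f)⟩
      map_add' := fun f g => lp.ext <| funext fun i => T.map_add (f i) (g i)
      map_smul' := fun c f => lp.ext <| funext fun i => T.map_smul c (f i) }
    ‖T‖ fun f =>
      lp.norm_le_of_forall_sum_le (by norm_num) (by positivity) (T.sum_norm_sq_apply_le f)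

@[simp]
theorem lpMap_apply (T : E →L[𝕜] F) (f : lp (fun _ : ι => E) 2) (i : ι) :
    T.lpMap f i = T (f i) :=
  rfl

theorem norm_lpMap_le (T : E →L[𝕜] F) : ‖(T.lpMap : lp (fun _ : ι => E) 2 →L[𝕜] _)‖ ≤ ‖T‖ :=
  LinearMap.mkContinuous_norm_le _ (norm_nonneg T) _

theorem lpMap_add (T S : E →L[𝕜] F) :
    ((T + S).lpMap : lp (fun _ : ι => E) 2 →L[𝕜] _) = T.lpMap + S.lpMap := by
  ext f i
  simp

theorem lpMap_smul (c : 𝕜) (T : E →L[𝕜] F) :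
    ((c • T).lpMap : lp (fun _ : ι => E) 2 →L[𝕜] _) = c • T.lpMap := by
  ext f i
  simp

end ContinuousLinearMap

@[simp]
theorem mulOp_apply (f : lp (fun _ : X => ℂ) ∞) (ξ : lp (fun _ : X => ℂ) 2) (x : X) :
    mulOp f ξ x = f x * ξ x :=
  rfl

section MultiplierColumn

variable {ι : Type*} (a : ι → X → ℂ)

theorem norm_le_one_of_hasSum_norm_sq (ha : ∀ x, HasSum (fun i => ‖a i x‖ ^ 2) 1)
    (i : ι) (x : X) : ‖a i x‖ ≤ 1 :=
  (pow_le_one_iff_of_nonneg (norm_nonneg _) two_ne_zero).1 <|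
    le_hasSum (ha x) i fun _ _ => by positivity

variable (ha : ∀ x, HasSum (fun i => ‖a i x‖ ^ 2) 1)

def multiplierAt (i : ι) : lp (fun _ : X => ℂ) ∞ :=
  ⟨a i, memℓp_infty ⟨1, by rintro r ⟨x, rfl⟩; exact norm_le_one_of_hasSum_norm_sq a ha i x⟩⟩

@[simp]
theorem multiplierAt_apply (i : ι) (x : X) : multiplierAt a ha i x = a i x :=
  rfl

theorem sum_norm_sq_mulOp_le (ξ : lp (fun _ : X => ℂ) 2) (s : Finset ι) :
    ∑ i ∈ s, ‖mulOp (multiplierAt a ha i) ξ‖ ^ (2 : ℝ≥0∞).toReal ≤ ‖ξ‖ ^ (2 : ℝ≥0∞).toReal := by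
  have hterm : ∀ i, HasSum (fun x => ‖a i x‖ ^ 2 * ‖ξ x‖ ^ 2)
      (‖mulOp (multiplierAt a ha i) ξ‖ ^ 2) := fun i => by
    simpa [← mul_pow] using lp.hasSum_norm (p := 2) (by norm_num) (mulOp (multiplierAt a ha i) ξ)
  have hξ : HasSum (fun x => ‖ξ x‖ ^ 2) (‖ξ‖ ^ 2) := by
    simpa using lp.hasSum_norm (p := 2) (by norm_num) ξ
  simp only [ENNReal.toReal_ofNat, Real.rpow_two]
  refine hasSum_le (fun x => ?_) (hasSum_sum fun i _ => hterm i) hξ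
  rw [← Finset.sum_mul]
  exact mul_le_of_le_one_left (by positivity) (sum_le_hasSum s (fun _ _ => by positivity) (ha x))

def mulColumn : lp (fun _ : X => ℂ) 2 →L[ℂ] lp (fun _ : ι => lp (fun _ : X => ℂ) 2) 2 :=
  LinearMap.mkContinuous
    { toFun := fun ξ => ⟨fun i => mulOp (multiplierAt a ha i) ξ,
        memℓp_gen' (sum_norm_sq_mulOp_le a ha ξ)⟩
      map_add' := fun ξ η => lp.ext <| funext fun i => map_add _ ξ η
      map_smul' := fun c ξ => lp.ext <| funext fun i => map_smul _ c ξ }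
    1 fun ξ => lp.norm_le_of_forall_sum_le (by norm_num) (by positivity)
      (by simpa using sum_norm_sq_mulOp_le a ha ξ)

theorem mulColumn_apply (ξ : lp (fun _ : X => ℂ) 2) (i : ι) :
    mulColumn a ha ξ i = mulOp (multiplierAt a ha i) ξ :=
  rfl

theorem norm_mulColumn_le : ‖mulColumn a ha‖ ≤ 1 :=
  LinearMap.mkContinuous_norm_le _ zero_le_one _

end MultiplierColumn

theorem mulOp_delta [DecidableEq X] (f : lp (fun _ : X => ℂ) ∞) (x : X) :
    mulOp f (delta x) = f x • delta x := by
  ext z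
  by_cases h : z = x <;> simp [delta, h]

section SchurMultiplier

variable {ι : Type*} (a : ι → X → ℂ) (ha : ∀ x, HasSum (fun i => ‖a i x‖ ^ 2) 1)

open ContinuousLinearMap

def schurMul :
    (lp (fun _ : X => ℂ) 2 →L[ℂ] lp (fun _ : X => ℂ) 2) →ₗ[ℂ]
      (lp (fun _ : X => ℂ) 2 →L[ℂ] lp (fun _ : X => ℂ) 2) where
  toFun T := adjoint (mulColumn a ha) ∘L T.lpMap ∘L mulColumn a ha
  map_add' T S := by simp [lpMap_add, add_comp, comp_add]
  map_smul' c T := by simp [lpMap_smul, smul_comp]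

theorem schurMul_apply (T : lp (fun _ : X => ℂ) 2 →L[ℂ] lp (fun _ : X => ℂ) 2) :
    schurMul a ha T = adjoint (mulColumn a ha) ∘L T.lpMap ∘L mulColumn a ha :=
  rfl

theorem hasSum_entry_schurMul [DecidableEq X]
    (T : lp (fun _ : X => ℂ) 2 →L[ℂ] lp (fun _ : X => ℂ) 2) (x y : X) :
    HasSum (fun i => star (a i x) * a i y * entry T x y) (entry (schurMul a ha T) x y) := by
  have h := lp.hasSum_inner (𝕜 := ℂ) (mulColumn a ha (delta x))
    (T.lpMap (mulColumn a ha (delta y)))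
  have hterm : ∀ i, ⟪mulColumn a ha (delta x) i, T.lpMap (mulColumn a ha (delta y)) i⟫_ℂ =
      star (a i x) * a i y * entry T x y := fun i => by
    simp only [mulColumn_apply, mulOp_delta, multiplierAt_apply, lpMap_apply, map_smul,
      inner_smul_left, inner_smul_right, RCLike.star_def, entry]
    ring
  have hval : entry (schurMul a ha T) x y =
      ⟪mulColumn a ha (delta x), T.lpMap (mulColumn a ha (delta y))⟫_ℂ := by
    rw [entry, schurMul_apply, ContinuousLinearMap.comp_apply, ContinuousLinearMap.comp_apply,
      adjoint_inner_right]
  rw [hval]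
  simpa only [hterm] using h

theorem norm_schurMul_le (T : lp (fun _ : X => ℂ) 2 →L[ℂ] lp (fun _ : X => ℂ) 2) :
    ‖schurMul a ha T‖ ≤ ‖T‖ :=
  calc ‖schurMul a ha T‖
      ≤ ‖adjoint (mulColumn a ha)‖ *
          (‖(T.lpMap : lp (fun _ : ι => _) 2 →L[ℂ] _)‖ * ‖mulColumn a ha‖) :=
        (opNorm_comp_le _ _).trans (by gcongr; exact opNorm_comp_le _ _)
    _ ≤ 1 * (‖T‖ * 1) := by
        rw [adjoint.norm_map]
        gcongr
        exacts [norm_mulColumn_le a ha, norm_lpMap_le T, norm_mulColumn_le a ha]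
    _ = ‖T‖ := by ring

end SchurMultiplier

theorem schur_multiplier_exists_general [DecidableEq X]
    (k : X → X → ℂ)
    (hpos : ∀ (n : ℕ) (x : Fin n → X) (lam : Fin n → ℂ),
      0 ≤ ∑ i, ∑ j, (starRingEnd ℂ) (lam i) * lam j * k (x i) (x j))
    (hnorm : ∀ x : X, k x x = 1) :
    ∃ M : (lp (fun _ : X => ℂ) 2 →L[ℂ] lp (fun _ : X => ℂ) 2) →ₗ[ℂ]
          (lp (fun _ : X => ℂ) 2 →L[ℂ] lp (fun _ : X => ℂ) 2),
      (∀ (T : lp (fun _ : X => ℂ) 2 →L[ℂ] lp (fun _ : X => ℂ) 2) (x y : X),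
        entry (M T) x y = k x y * entry T x y) ∧
      ∀ T : lp (fun _ : X => ℂ) 2 →L[ℂ] lp (fun _ : X => ℂ) 2, ‖M T‖ ≤ ‖T‖ := by
  obtain ⟨ι, a, hk⟩ := (Matrix.posSemidef_of_forall_fin_sum_nonneg hpos).exists_hasSum_star_mul
  have ha : ∀ x, HasSum (fun i => ‖a i x‖ ^ 2) 1 := fun x => by
    simpa [Complex.conj_mul', ← Complex.ofReal_pow, hnorm] using Complex.hasSum_re (hk x x)
  refine ⟨schurMul a ha, fun T x y => ?_, norm_schurMul_le a ha⟩
  exact (hasSum_entry_schurMul a ha T x y).unique ((hk x y).mul_right _)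

/-- for a normalised kernel of positive type `k` on a countable set `X`,
the Schur multiplier `m_k` is a well-defined bounded linear map on `B(ℓ²(X))` of norm at
most one: there exists a linear map `M` with matrix entries
`(M T)_{x,y} = k x y * T_{x,y}` and `‖M T‖ ≤ ‖T‖` for every `T`. -/
theorem schur_multiplier_exists [Countable X] [DecidableEq X]
    (k : X → X → ℂ)
    (hpos : ∀ (n : ℕ) (x : Fin n → X) (lam : Fin n → ℂ),
      0 ≤ ∑ i, ∑ j, (starRingEnd ℂ) (lam i) * lam j * k (x i) (x j))
    (hnorm : ∀ x : X, k x x = 1) :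
    ∃ M : (lp (fun _ : X => ℂ) 2 →L[ℂ] lp (fun _ : X => ℂ) 2) →ₗ[ℂ]
          (lp (fun _ : X => ℂ) 2 →L[ℂ] lp (fun _ : X => ℂ) 2),
      (∀ (T : lp (fun _ : X => ℂ) 2 →L[ℂ] lp (fun _ : X => ℂ) 2) (x y : X),
        entry (M T) x y = k x y * entry T x y) ∧
      ∀ T : lp (fun _ : X => ℂ) 2 →L[ℂ] lp (fun _ : X => ℂ) 2, ‖M T‖ ≤ ‖T‖ :=
  schur_multiplier_exists_general k hpos hnorm
end
end

section
/- Let X be a discrete metric space with bounded geometry, R > 0 and ε > 0, and let k be a normalised symmetric positive-type kernel on X with finite propagation S and (R,ε)-variation (|1 − k(x,y)| < ε whenever d(x,y) < R). Then for any T ∈ B(ℓ²(X)) whose propagation is at most R' < R (T_{x,y} = 0 if d(x,y) > R'), the Schur multiplier satisfies ‖m_k(T) − T‖ ≤ ε · N · ‖T‖, where N = sup_x #B(x,R'). -/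
open scoped ENNReal
open Metric Set Function

noncomputable section

variable {X : Type*}

/-!
The entries of `M - T` are `(k x y - 1) * entry T x y`: they vanish off the band
`dist x y ≤ R'` and are bounded by `ε * ‖T‖` on it. By the Schur test, an operator whose absolute
row and column sums are at most `C` has norm at most `C`; here every row and column has at most
`N` nonzero entries.
-/

open scoped lp InnerProductSpace

lemma Finset.sum_le_sum_of_ne_zero_of_nonneg {ι : Type*} {s t : Finset ι} {f : ι → ℝ}
    (hf : ∀ i, 0 ≤ f i) (h : ∀ i ∈ s, f i ≠ 0 → i ∈ t) : ∑ i ∈ s, f i ≤ ∑ i ∈ t, f i := by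
  classical
  calc ∑ i ∈ s, f i = ∑ i ∈ s ∩ t, f i :=
        (Finset.sum_subset Finset.inter_subset_left fun i hs hst =>
          not_not.1 fun hi => hst (Finset.mem_inter.2 ⟨hs, h i hs hi⟩)).symm
    _ ≤ ∑ i ∈ t, f i :=
        Finset.sum_le_sum_of_subset_of_nonneg Finset.inter_subset_right fun i _ _ => hf i

section Entries

variable [DecidableEq X]

lemma inner_delta_left (x : X) (ξ : ℓ²(X, ℂ)) : ⟪delta x, ξ⟫_ℂ = ξ x := by
  simp [delta, lp.inner_single_left]

lemma norm_delta (x : X) : ‖delta x‖ = 1 := by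
  simp [delta, lp.norm_single]

lemma entry_eq_apply (A : ℓ²(X, ℂ) →L[ℂ] ℓ²(X, ℂ)) (x y : X) :
    entry A x y = A (delta y) x :=
  inner_delta_left x _

lemma entry_sub (A B : ℓ²(X, ℂ) →L[ℂ] ℓ²(X, ℂ)) (x y : X) :
    entry (A - B) x y = entry A x y - entry B x y := by
  simp [entry_eq_apply]

lemma norm_entry_le (A : ℓ²(X, ℂ) →L[ℂ] ℓ²(X, ℂ)) (x y : X) : ‖entry A x y‖ ≤ ‖A‖ :=
  calc ‖entry A x y‖ ≤ ‖delta x‖ * ‖A (delta y)‖ := norm_inner_le_norm _ _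
    _ ≤ ‖A‖ := by simpa [norm_delta] using A.le_opNorm (delta y)

lemma hasSum_mul_entry (A : ℓ²(X, ℂ) →L[ℂ] ℓ²(X, ℂ)) (ξ : ℓ²(X, ℂ)) (x : X) :
    HasSum (fun y => ξ y * entry A x y) (A ξ x) := by
  have hξ : HasSum (fun y => ξ y • delta y) ξ := by
    simpa [delta, ← lp.single_smul] using lp.hasSum_single ENNReal.ofNat_ne_top ξ
  have heval (η : ℓ²(X, ℂ)) : lp.evalCLM ℂ (fun _ => ℂ) 2 x η = η x := rfl
  simpa only [ContinuousLinearMap.comp_apply, map_smul, heval, lp.coeFn_smul, Pi.smul_apply,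
    smul_eq_mul, entry_eq_apply] using hξ.mapL ((lp.evalCLM ℂ _ 2 x).comp A)

lemma eq_zero_of_entry_eq_zero (A : ℓ²(X, ℂ) →L[ℂ] ℓ²(X, ℂ)) (h : ∀ x y, entry A x y = 0) :
    A = 0 := by
  ext ξ x
  have hA := hasSum_mul_entry A ξ x
  simp only [h, mul_zero] at hA
  exact hA.unique hasSum_zero

end Entries

lemma lp.sum_norm_sq_le_norm_sq {E : X → Type*} [∀ x, NormedAddCommGroup (E x)]
    (ξ : lp E 2) (s : Finset X) : ∑ x ∈ s, ‖ξ x‖ ^ 2 ≤ ‖ξ‖ ^ 2 := by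
  simpa [Real.rpow_two] using lp.sum_rpow_le_norm_rpow (p := 2) (by norm_num) ξ s

section SchurTest

variable [DecidableEq X] (A : ℓ²(X, ℂ) →L[ℂ] ℓ²(X, ℂ)) {C : ℝ} {r g : X → Finset X}

lemma apply_eq_sum_mul_entry (hr : ∀ x y, entry A x y ≠ 0 → y ∈ r x) (ξ : ℓ²(X, ℂ)) (x : X) :
    A ξ x = ∑ y ∈ r x, ξ y * entry A x y :=
  (hasSum_mul_entry A ξ x).unique <| hasSum_sum_of_ne_finset_zero fun y hy => by
    rw [not_imp_comm.1 (hr x y) hy, mul_zero]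

lemma norm_apply_sq_le (hr : ∀ x y, entry A x y ≠ 0 → y ∈ r x)
    (hrow : ∀ x, ∑ y ∈ r x, ‖entry A x y‖ ≤ C) (ξ : ℓ²(X, ℂ)) (x : X) :
    ‖A ξ x‖ ^ 2 ≤ C * ∑ y ∈ r x, ‖entry A x y‖ * ‖ξ y‖ ^ 2 := by
  have hcs : (∑ y ∈ r x, ‖entry A x y‖ * ‖ξ y‖) ^ 2
      ≤ (∑ y ∈ r x, ‖entry A x y‖) * ∑ y ∈ r x, ‖entry A x y‖ * ‖ξ y‖ ^ 2 :=
    Finset.sum_sq_le_sum_mul_sum_of_sq_le_mul _ (fun _ _ => norm_nonneg _)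
      (fun _ _ => by positivity) fun _ _ => le_of_eq (by ring)
  calc ‖A ξ x‖ ^ 2 ≤ (∑ y ∈ r x, ‖entry A x y‖ * ‖ξ y‖) ^ 2 := by
        gcongr
        rw [apply_eq_sum_mul_entry A hr]
        exact (norm_sum_le _ _).trans_eq (by simp only [norm_mul, mul_comm])
    _ ≤ (∑ y ∈ r x, ‖entry A x y‖) * ∑ y ∈ r x, ‖entry A x y‖ * ‖ξ y‖ ^ 2 := hcs
    _ ≤ C * ∑ y ∈ r x, ‖entry A x y‖ * ‖ξ y‖ ^ 2 := by gcongr; exact hrow x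

theorem opNorm_le_of_sum_norm_entry_le (hC : 0 ≤ C)
    (hr : ∀ x y, entry A x y ≠ 0 → y ∈ r x) (hg : ∀ x y, entry A x y ≠ 0 → x ∈ g y)
    (hrow : ∀ x, ∑ y ∈ r x, ‖entry A x y‖ ≤ C) (hcol : ∀ y, ∑ x ∈ g y, ‖entry A x y‖ ≤ C) :
    ‖A‖ ≤ C := by
  refine A.opNorm_le_bound hC fun ξ =>
    lp.norm_le_of_forall_sum_le (by norm_num) (by positivity) fun s => ?_
  simp only [ENNReal.toReal_ofNat, Real.rpow_two]
  classical
  set U := s.biUnion r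
  have hrowU (x : X) (hx : x ∈ s) : ∑ y ∈ r x, ‖entry A x y‖ * ‖ξ y‖ ^ 2
      = ∑ y ∈ U, ‖entry A x y‖ * ‖ξ y‖ ^ 2 :=
    Finset.sum_subset (Finset.subset_biUnion_of_mem r hx) fun y _ hy => by
      rw [not_imp_comm.1 (hr x y) hy, norm_zero, zero_mul]
  have hcolU (y : X) : ∑ x ∈ s, ‖entry A x y‖ ≤ C :=
    (Finset.sum_le_sum_of_ne_zero_of_nonneg (fun _ => norm_nonneg _)
      fun x _ hx => hg x y (norm_ne_zero_iff.1 hx)).trans (hcol y)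
  calc ∑ x ∈ s, ‖A ξ x‖ ^ 2 ≤ ∑ x ∈ s, C * ∑ y ∈ U, ‖entry A x y‖ * ‖ξ y‖ ^ 2 :=
        Finset.sum_le_sum fun x hx => hrowU x hx ▸ norm_apply_sq_le A hr hrow ξ x
    _ = C * ∑ y ∈ U, (∑ x ∈ s, ‖entry A x y‖) * ‖ξ y‖ ^ 2 := by
        simp only [← Finset.mul_sum, Finset.sum_mul]
        rw [Finset.sum_comm]
    _ ≤ C * ∑ y ∈ U, C * ‖ξ y‖ ^ 2 := by gcongr with y; exact hcolU y
    _ ≤ (C * ‖ξ‖) ^ 2 := by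
        rw [← Finset.mul_sum, ← mul_assoc, mul_pow, ← sq]
        gcongr
        exact lp.sum_norm_sq_le_norm_sq ξ U

theorem opNorm_le_of_propagation_le [MetricSpace X] {ρ c : ℝ} {N : ℕ} (hc : 0 ≤ c)
    (hA : ∀ x y, ρ < dist x y → entry A x y = 0)
    (hbound : ∀ x y, dist x y ≤ ρ → ‖entry A x y‖ ≤ c)
    (hN : ∀ x : X, (closedBall x ρ).Finite ∧ (closedBall x ρ).ncard ≤ N) :
    ‖A‖ ≤ N * c := by
  let B (x : X) : Finset X := (hN x).1.toFinset
  have hB (x y : X) : y ∈ B x ↔ dist y x ≤ ρ := by simp [B]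
  have hsupp (x y : X) (h : entry A x y ≠ 0) : dist x y ≤ ρ := not_lt.1 (mt (hA x y) h)
  have hsum (x : X) (f : X → ℝ) (hf : ∀ y ∈ B x, f y ≤ c) : ∑ y ∈ B x, f y ≤ N * c :=
    calc ∑ y ∈ B x, f y ≤ (B x).card * c := by
          simpa using Finset.sum_le_card_nsmul _ _ _ hf
      _ ≤ N * c := by
          gcongr
          simpa [B, Set.ncard_eq_toFinset_card _ (hN x).1] using (hN x).2
  refine opNorm_le_of_sum_norm_entry_le A (by positivity) (r := B) (g := B)
    (fun x y h => (hB x y).2 (dist_comm x y ▸ hsupp x y h)) (fun x y h => (hB y x).2 (hsupp x y h))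
    (fun x => hsum x _ fun y hy => hbound x y (dist_comm x y ▸ (hB x y).1 hy))
    (fun y => hsum y _ fun x hx => hbound x y ((hB y x).1 hx))

end SchurTest

theorem schur_multiplier_close_to_identity_general [MetricSpace X] [DecidableEq X]
    (k : X → X → ℝ) (R R' ε : ℝ) (N : ℕ)
    (hvar : ∀ x y : X, dist x y < R → |1 - k x y| < ε)
    (hR' : R' < R)
    (T : lp (fun _ : X => ℂ) 2 →L[ℂ] lp (fun _ : X => ℂ) 2)
    (hT : ∀ x y : X, R' < dist x y → entry T x y = 0)
    (hN : ∀ x : X, (Metric.closedBall x R').Finite ∧ (Metric.closedBall x R').ncard ≤ N)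
    (M : lp (fun _ : X => ℂ) 2 →L[ℂ] lp (fun _ : X => ℂ) 2)
    (hM : ∀ x y : X, entry M x y = k x y * entry T x y) :
    ‖M - T‖ ≤ ε * N * ‖T‖ := by
  have hMT (x y : X) : entry (M - T) x y = (k x y - 1 : ℝ) * entry T x y := by
    rw [entry_sub, hM]; push_cast; ring
  obtain hε | hε := lt_or_ge ε 0
  · -- for negative `ε`, `hvar` forbids every nonzero entry of `T`
    have hT0 (x y : X) : entry T x y = 0 := by
      by_contra h
      linarith [abs_nonneg (1 - k x y), hvar x y ((not_lt.1 (mt (hT x y) h)).trans_lt hR')]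
    rw [eq_zero_of_entry_eq_zero T hT0,
      eq_zero_of_entry_eq_zero M fun x y => by rw [hM, hT0, mul_zero]]
    simp
  refine (opNorm_le_of_propagation_le (M - T) (mul_nonneg hε (norm_nonneg T))
    (fun x y h => by rw [hMT, hT x y h, mul_zero]) (fun x y h => ?_) hN).trans_eq (by ring)
  rw [hMT, norm_mul, Complex.norm_real, Real.norm_eq_abs, abs_sub_comm]
  exact mul_le_mul (hvar x y (h.trans_lt hR')).le (norm_entry_le T x y) (norm_nonneg _) hε

/-- the Schur multiplier by a normalised symmetric positive-type kernel of
finite propagation and small variation is close to the identity on operators of small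
propagation. -/
theorem schur_multiplier_close_to_identity [MetricSpace X] [DecidableEq X]
    (k : X → X → ℝ) (S R R' ε : ℝ) (N : ℕ)
    (hpos : ∀ (n : ℕ) (x : Fin n → X) (lam : Fin n → ℝ),
      0 ≤ ∑ i, ∑ j, lam i * lam j * k (x i) (x j))
    (hnorm : ∀ x : X, k x x = 1)
    (hsymm : ∀ x y : X, k x y = k y x)
    (hfinprop : ∀ x y : X, S < dist x y → k x y = 0)
    (hvar : ∀ x y : X, dist x y < R → |1 - k x y| < ε)
    (hR' : R' < R)
    (T : lp (fun _ : X => ℂ) 2 →L[ℂ] lp (fun _ : X => ℂ) 2)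
    (hT : ∀ x y : X, R' < dist x y → entry T x y = 0)
    (hN : ∀ x : X, (Metric.closedBall x R').Finite ∧ (Metric.closedBall x R').ncard ≤ N)
    (M : lp (fun _ : X => ℂ) 2 →L[ℂ] lp (fun _ : X => ℂ) 2)
    (hM : ∀ x y : X, entry M x y = k x y * entry T x y) :
    ‖M - T‖ ≤ ε * N * ‖T‖ :=
  schur_multiplier_close_to_identity_general k R R' ε N hvar hR' T hT hN M hM
end
end
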